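/- arXiv:cs/0506029 — 5 statements merged into one kernel-verified Lean document; each statement's English description precedes it below -/
import Mathlib

section
/- Let X be the sum of squares of k i.i.d. mean-zero Gaussian random variables each of variance σ², and let β satisfy 0 < β < kσ². Then P(X ≤ β) ≤ (β/(σ²k))^{k/2} · e^{k/2 - β/(2σ²)}. -/
open MeasureTheory ProbabilityTheory Real

open scoped NNReal

/-! Chernoff's method on the lower tail: for `t ≤ 0`, `P(X ≤ β) ≤ e^{-tβ} E[e^{tX}]`.
A Gaussian integral gives `E[e^{t w²}] = (1 - 2tσ²)^{-1/2}` for `w ~ N(0, σ²)`, so by independence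
`E[e^{tX}] = (1 - 2tσ²)^{-k/2}`; the bound follows by optimising in `t`. -/

lemma mgf_sq_gaussianReal (v : ℝ≥0) {t : ℝ} (ht : 2 * t * v < 1) :
    mgf (fun x ↦ x ^ 2) (gaussianReal 0 v) t = (1 - 2 * t * v) ^ (-(1 / 2 : ℝ)) := by
  rcases eq_or_ne v 0 with rfl | hv
  · simp [mgf, gaussianReal_zero_var]
  have hv' : (0 : ℝ) < v := by positivity
  have hdensity : ∀ x : ℝ, gaussianPDFReal 0 v x • exp (t * x ^ 2)
      = (√(2 * π * v))⁻¹ * exp (-((1 - 2 * t * v) / (2 * v)) * x ^ 2) := by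
    intro x
    rw [gaussianPDFReal, smul_eq_mul, mul_assoc, ← exp_add]
    congr 2
    field_simp
    ring
  rw [mgf, integral_gaussianReal_eq_integral_smul hv]
  simp_rw [hdensity]
  rw [integral_const_mul, integral_gaussian, div_div_eq_mul_div, sqrt_div' _ (by linarith),
    show π * (2 * (v : ℝ)) = 2 * π * v by ring, rpow_neg (by linarith), ← sqrt_eq_rpow]
  have : 0 < √(2 * π * v) := sqrt_pos.mpr (mul_pos (by positivity) hv')
  field_simp

section

variable {Ω : Type*} [MeasurableSpace Ω] {μ : Measure Ω}

lemma aemeasurable_of_map_eq_gaussianReal {X : Ω → ℝ} {m : ℝ} {v : ℝ≥0}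
    (h : μ.map X = gaussianReal m v) : AEMeasurable X μ :=
  .of_map_ne_zero (by rw [h]; exact IsProbabilityMeasure.ne_zero _)

lemma mgf_sum_sq_of_gaussianReal {ι : Type*} [Fintype ι] {w : ι → Ω → ℝ} {v : ℝ≥0}
    (hindep : iIndepFun w μ) (hdist : ∀ i, μ.map (w i) = gaussianReal 0 v)
    {t : ℝ} (ht : 2 * t * v < 1) :
    mgf (fun ω ↦ ∑ i, w i ω ^ 2) μ t = (1 - 2 * t * v) ^ (-(Fintype.card ι / 2 : ℝ)) := by
  have hw i := aemeasurable_of_map_eq_gaussianReal (hdist i)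
  have hsq : iIndepFun (fun i ω ↦ w i ω ^ 2) μ :=
    hindep.comp (fun _ x ↦ x ^ 2) fun _ ↦ by fun_prop
  have hone : ∀ i, mgf (fun ω ↦ w i ω ^ 2) μ t = (1 - 2 * t * v) ^ (-(1 / 2 : ℝ)) := by
    intro i
    rw [← mgf_sq_gaussianReal v ht, ← hdist i, mgf_map (hw i) (by fun_prop)]
    rfl
  have hsum : (fun ω ↦ ∑ i, w i ω ^ 2) = ∑ i, fun ω ↦ w i ω ^ 2 := by
    ext ω; simp
  rw [hsum, hsq.mgf_sum₀ (fun i ↦ (hw i).pow_const 2), Finset.prod_congr rfl fun i _ ↦ hone i,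
    Finset.prod_const, Finset.card_univ, ← rpow_natCast, ← rpow_mul (by linarith)]
  ring_nf

lemma measureReal_le_le_exp_mul_mgf_of_nonneg [IsFiniteMeasure μ] {X : Ω → ℝ}
    (hX : AEMeasurable X μ) (hX0 : ∀ ω, 0 ≤ X ω) {t : ℝ} (ht : t ≤ 0) (ε : ℝ) :
    μ.real {ω | X ω ≤ ε} ≤ exp (-t * ε) * mgf X μ t := by
  refine measure_le_le_exp_mul_mgf ε ht (.of_mem_Icc 0 1 (by fun_prop) (.of_forall fun ω ↦ ?_))
  exact ⟨(exp_pos _).le, exp_le_one_iff.mpr (mul_nonpos_of_nonpos_of_nonneg ht (hX0 ω))⟩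

end

theorem chi_square_lower_tail_general
    {Ω : Type*} [MeasurableSpace Ω] (μ : Measure Ω) [IsProbabilityMeasure μ]
    (k : ℕ) (σ2 : NNReal)
    (w : Fin k → Ω → ℝ)
    (hindep : iIndepFun w μ)
    (hdist : ∀ i, Measure.map (w i) μ = gaussianReal 0 σ2)
    (β : ℝ) (hβ0 : 0 < β) (hβ : β < k * σ2) :
    μ {ω | (∑ i, (w i ω) ^ 2) ≤ β} ≤
      ENNReal.ofReal ((β / (σ2 * k)) ^ ((k : ℝ) / 2) *
        Real.exp ((k : ℝ) / 2 - β / (2 * σ2))) := by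
  have hσ2 : 0 < (σ2 : ℝ) := pos_of_mul_pos_right (hβ0.trans hβ) k.cast_nonneg
  have hk : 0 < (k : ℝ) := pos_of_mul_pos_left (hβ0.trans hβ) σ2.coe_nonneg
  -- the minimiser of `t ↦ -t β - (k / 2) log (1 - 2 t σ²)`
  set t : ℝ := (1 - k * σ2 / β) / (2 * σ2) with ht_def
  have ht_nonpos : t ≤ 0 := by
    refine div_nonpos_of_nonpos_of_nonneg ?_ (by positivity)
    rw [sub_nonpos, le_div_iff₀ hβ0]
    linarith
  have hratio : 1 - 2 * t * σ2 = k * σ2 / β := by rw [ht_def]; field_simp; ring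
  have ht : 2 * t * σ2 < 1 := by
    have : 0 < k * σ2 / β := by positivity
    linarith
  have hexponent : -t * β = k / 2 - β / (2 * σ2) := by rw [ht_def]; field_simp; ring
  have hX : AEMeasurable (fun ω ↦ ∑ i, w i ω ^ 2) μ := Finset.aemeasurable_fun_sum _ fun i _ ↦
    (aemeasurable_of_map_eq_gaussianReal (hdist i)).pow_const 2
  have hchernoff := measureReal_le_le_exp_mul_mgf_of_nonneg hX
    (fun ω ↦ Finset.sum_nonneg fun i _ ↦ sq_nonneg (w i ω)) ht_nonpos β
  rw [mgf_sum_sq_of_gaussianReal hindep hdist ht, hratio, hexponent, Fintype.card_fin,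
    rpow_neg (by positivity), ← inv_rpow (by positivity), inv_div, mul_comm (k : ℝ)]
    at hchernoff
  rw [← ofReal_measureReal]
  exact ENNReal.ofReal_le_ofReal (hchernoff.trans_eq (mul_comm _ _))

/-- Chernoff lower-tail bound for a scaled chi-square variable: if
`X = ∑_{i<k} w_i²` with the `w_i` i.i.d. mean-zero Gaussians of variance `σ²`,
and `0 < β < k σ²`, then `P(X ≤ β) ≤ (β/(σ² k))^{k/2} e^{k/2 - β/(2σ²)}`. -/
theorem chi_square_lower_tail
    {Ω : Type*} [MeasurableSpace Ω] (μ : Measure Ω) [IsProbabilityMeasure μ]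
    (k : ℕ) (hk : 0 < k) (σ2 : NNReal) (hσ2 : 0 < (σ2 : ℝ))
    (w : Fin k → Ω → ℝ) (hmeas : ∀ i, Measurable (w i))
    (hindep : iIndepFun w μ)
    (hdist : ∀ i, Measure.map (w i) μ = gaussianReal 0 σ2)
    (β : ℝ) (hβ0 : 0 < β) (hβ : β < k * σ2) :
    μ {ω | (∑ i, (w i ω) ^ 2) ≤ β} ≤
      ENNReal.ofReal ((β / (σ2 * k)) ^ ((k : ℝ) / 2) *
        Real.exp ((k : ℝ) / 2 - β / (2 * σ2))) :=
  chi_square_lower_tail_general μ k σ2 w hindep hdist β hβ0 hβ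
end

section
/- Let X₁, X₂, ... be i.i.d. real random variables with P(X_i > 0) > 0, P(X_i < 0) > 0, E[X_i] < 0, and suppose λ₀ > 0 satisfies E[e^{λ₀ X_i}] = 1. Then for the random walk S_j = X₁ + ⋯ + X_j (with S₀ = 0) and any u > 0, P(sup_{j ≥ 0} S_j > u) ≤ e^{-λ₀ u}. -/
/-!
Because `E[e^{λ₀ X}] = 1`, the process `e^{λ₀ S_{n+1}}` is a nonnegative martingale of mean one.
Doob's maximal inequality bounds `P(max_{k ≤ n} S_{k+1} ≥ u)` by `e^{-λ₀ u}`, and letting `n → ∞`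
gives the claim, the term `S₀ = 0` never exceeding `u > 0`.
-/

open MeasureTheory ProbabilityTheory Real Finset

namespace ProbabilityTheory

variable {Ω : Type*} [MeasurableSpace Ω] {μ : Measure Ω} {X : ℕ → Ω → ℝ} {t : ℝ}

/-- The time index is shifted by one so that `X (n + 1)` is independent of the natural
filtration at time `n`. -/
theorem iIndepFun.martingale_exp_mul_sum_range_succ (hX : ∀ i, StronglyMeasurable (X i))
    (hindep : iIndepFun X μ) (hmgf : ∀ i, mgf (X i) μ t = 1) :
    Martingale (fun n ω ↦ exp (t * ∑ i ∈ range (n + 1), X i ω)) (Filtration.natural X hX) μ := by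
  have := hindep.isProbabilityMeasure
  set ℱ := Filtration.natural X hX
  have hint_step : ∀ i, Integrable (fun ω ↦ exp (t * X i ω)) μ := fun i ↦
    .of_integral_ne_zero (by rw [← mgf, hmgf i]; exact one_ne_zero)
  have hint : ∀ n, Integrable (fun ω ↦ exp (t * ∑ i ∈ range n, X i ω)) μ := fun n ↦ by
    simpa using hindep.integrable_exp_mul_sum (fun i ↦ (hX i).measurable) fun i _ ↦ hint_step i
  have hadapted : StronglyAdapted ℱ (fun n ω ↦ exp (t * ∑ i ∈ range (n + 1), X i ω)) := by
    intro n
    refine (Measurable.exp (.const_mul (Finset.measurable_sum _ fun i hi ↦ ?_) t))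
      |>.stronglyMeasurable
    exact ((Filtration.stronglyAdapted_natural hX i).mono
      (ℱ.mono (Nat.lt_succ_iff.mp (mem_range.mp hi)))).measurable
  refine martingale_nat hadapted (fun n ↦ hint (n + 1)) fun n ↦ ?_
  have hsplit : (fun ω ↦ exp (t * ∑ i ∈ range (n + 1 + 1), X i ω)) =
      (fun ω ↦ exp (t * ∑ i ∈ range (n + 1), X i ω)) * fun ω ↦ exp (t * X (n + 1) ω) := by
    ext ω; simp only [sum_range_succ _ (n + 1), mul_add, exp_add, Pi.mul_apply]
  have hindep_step : μ[fun ω ↦ exp (t * X (n + 1) ω) | ℱ n] =ᵐ[μ] fun _ ↦ 1 := by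
    rw [← hmgf (n + 1)]
    exact condExp_indep_eq (hX (n + 1)).measurable.comap_le (ℱ.le n)
      (((measurable_const_mul t).exp.comp (comap_measurable (X (n + 1)))).stronglyMeasurable)
      (hindep.indep_comap_natural_of_lt hX n.lt_succ_self)
  rw [hsplit]
  filter_upwards [condExp_mul_of_stronglyMeasurable_left (hadapted n) (hsplit ▸ hint (n + 1 + 1))
    (hint_step (n + 1)), hindep_step] with ω h1 h2
  simp [h1, h2]

theorem iIndepFun.measure_exists_le_sum_range_succ_le (hX : ∀ i, Measurable (X i))
    (hindep : iIndepFun X μ) (hmgf : ∀ i, mgf (X i) μ t = 1) (ht : 0 ≤ t) (u : ℝ) (n : ℕ) :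
    μ {ω | ∃ k ≤ n, u ≤ ∑ i ∈ range (k + 1), X i ω} ≤ ENNReal.ofReal (exp (-t * u)) := by
  have := hindep.isProbabilityMeasure
  set M : ℕ → Ω → ℝ := fun n ω ↦ exp (t * ∑ i ∈ range (n + 1), X i ω)
  have hM := hindep.martingale_exp_mul_sum_range_succ (fun i ↦ (hX i).stronglyMeasurable) hmgf
  set ε := (exp (t * u)).toNNReal
  have hsubset : {ω | ∃ k ≤ n, u ≤ ∑ i ∈ range (k + 1), X i ω} ⊆
      {ω | (ε : ℝ) ≤ (range (n + 1)).sup' nonempty_range_add_one fun k ↦ M k ω} := by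
    rintro ω ⟨k, hkn, hk⟩
    rw [Set.mem_ofPred_eq, Real.coe_toNNReal _ (exp_pos _).le]
    exact le_sup'_of_le _ (mem_range_succ_iff.mpr hkn)
      (exp_le_exp.mpr (mul_le_mul_of_nonneg_left hk ht))
  have hmean : ∫ ω, M n ω ∂μ = 1 := by
    have h := hindep.mgf_sum hX (range (n + 1)) (t := t)
    simp only [hmgf, prod_const_one] at h
    simpa [mgf, M] using h
  have hbound : μ {ω | ∃ k ≤ n, u ≤ ∑ i ∈ range (k + 1), X i ω} * ε ≤ 1 :=
    calc _ ≤ ε * μ {ω | (ε : ℝ) ≤ (range (n + 1)).sup' nonempty_range_add_one fun k ↦ M k ω} := by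
          rw [mul_comm]; gcongr
      _ ≤ ENNReal.ofReal (∫ ω in _, M n ω ∂μ) :=
          maximal_ineq hM.submartingale (fun _ _ ↦ (exp_pos _).le) n
      _ ≤ ENNReal.ofReal (∫ ω, M n ω ∂μ) :=
          ENNReal.ofReal_le_ofReal <|
            setIntegral_le_integral (hM.integrable n) (ae_of_all _ fun _ ↦ (exp_pos _).le)
      _ = 1 := by rw [hmean, ENNReal.ofReal_one]
  rw [neg_mul, exp_neg, ENNReal.ofReal_inv_of_pos (exp_pos _)]
  exact ENNReal.le_inv_iff_mul_le.mpr hbound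

theorem iIndepFun.measure_exists_lt_sum_range_le (hX : ∀ i, Measurable (X i))
    (hindep : iIndepFun X μ) (hmgf : ∀ i, mgf (X i) μ t = 1) (ht : 0 ≤ t) {u : ℝ} (hu : 0 ≤ u) :
    μ {ω | ∃ j, u < ∑ i ∈ range j, X i ω} ≤ ENNReal.ofReal (exp (-t * u)) := by
  have hcover : {ω | ∃ j, u < ∑ i ∈ range j, X i ω} ⊆
      ⋃ n, {ω | ∃ k ≤ n, u ≤ ∑ i ∈ range (k + 1), X i ω} := by
    rintro ω ⟨_ | k, hk⟩
    · exact absurd hu (by simpa using hk)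
    · exact Set.mem_iUnion.mpr ⟨k, k, le_rfl, hk.le⟩
  have hmono : Monotone fun n ↦ {ω | ∃ k ≤ n, u ≤ ∑ i ∈ range (k + 1), X i ω} :=
    fun _ _ hmn _ ⟨k, hk, hkS⟩ ↦ ⟨k, hk.trans hmn, hkS⟩
  calc _ ≤ μ (⋃ n, {ω | ∃ k ≤ n, u ≤ ∑ i ∈ range (k + 1), X i ω}) := measure_mono hcover
    _ = ⨆ n, μ {ω | ∃ k ≤ n, u ≤ ∑ i ∈ range (k + 1), X i ω} := hmono.measure_iUnion
    _ ≤ _ := iSup_le (hindep.measure_exists_le_sum_range_succ_le hX hmgf ht u)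

end ProbabilityTheory

theorem wald_inequality_general
    {Ω : Type*} [MeasurableSpace Ω] (μ : Measure Ω)
    (X : ℕ → Ω → ℝ) (hmeas : ∀ i, Measurable (X i))
    (hindep : iIndepFun X μ)
    (hident : ∀ i, Measure.map (X i) μ = Measure.map (X 0) μ)
    (lam0 : ℝ) (hlam0 : 0 < lam0)
    (hmgf : ∫ ω, Real.exp (lam0 * X 0 ω) ∂μ = 1)
    (u : ℝ) (hu : 0 < u) :
    μ {ω | ∃ j : ℕ, u < ∑ i ∈ Finset.range j, X i ω} ≤
      ENNReal.ofReal (Real.exp (-lam0 * u)) := by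
  have hmgf_all : ∀ i, mgf (X i) μ lam0 = 1 := fun i ↦ by
    rw [mgf_congr_of_identDistrib (X i) (X 0)
      ⟨(hmeas i).aemeasurable, (hmeas 0).aemeasurable, hident i⟩]
    exact hmgf
  exact hindep.measure_exists_lt_sum_range_le hmeas hmgf_all hlam0.le hu.le

/-- Wald's inequality: for a random walk `S_j = X₁ + ⋯ + X_j` with i.i.d. steps
satisfying `P(X > 0) > 0`, `P(X < 0) > 0`, `E[X] < 0`, and `λ₀ > 0` with
`E[e^{λ₀ X}] = 1`, one has `P(sup_{j≥0} S_j > u) ≤ e^{-λ₀ u}` for every `u > 0`. -/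
theorem wald_inequality
    {Ω : Type*} [MeasurableSpace Ω] (μ : Measure Ω) [IsProbabilityMeasure μ]
    (X : ℕ → Ω → ℝ) (hmeas : ∀ i, Measurable (X i))
    (hindep : iIndepFun X μ)
    (hident : ∀ i, Measure.map (X i) μ = Measure.map (X 0) μ)
    (hpos : 0 < μ {ω | 0 < X 0 ω}) (hneg : 0 < μ {ω | X 0 ω < 0})
    (hint : Integrable (X 0) μ) (hdrift : ∫ ω, X 0 ω ∂μ < 0)
    (lam0 : ℝ) (hlam0 : 0 < lam0)
    (hmgf : ∫ ω, Real.exp (lam0 * X 0 ω) ∂μ = 1)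
    (u : ℝ) (hu : 0 < u) :
    μ {ω | ∃ j : ℕ, u < ∑ i ∈ Finset.range j, X i ω} ≤
      ENNReal.ofReal (Real.exp (-lam0 * u)) :=
  wald_inequality_general μ X hmeas hindep hident lam0 hlam0 hmgf u hu
end

section
/- Let the cost function of a node x₁^k in a tree be f(x₁^k) = ∑_{i=1}^k w_i(x₁^i) - bk with b ≥ 0 and w_i ≥ 0. If x̄₁^m is the leaf path chosen by the stack (best-first) algorithm, then for every leaf path x₁^m in the tree, max_{1 ≤ j ≤ m} f(x̄₁^j) ≤ max_{1 ≤ j ≤ m} f(x₁^j). -/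
/-! Model of the stack (best-first) tree-search algorithm on the full tree of
depth `m` over a finite alphabet `α`.  A node is a list of symbols (the path from
the root); `w p` is the branch metric of the node `p`; the cost of a node is
`f(x₁^k) = ∑_{i=1}^k w_i(x₁^i) - b k`.  The algorithm keeps a frontier `F`,
repeatedly expands a minimum-cost node, and stops when a leaf (length `m`) is
best; `G` accumulates the set of generated nodes. -/

namespace StackAlg

variable {α : Type} [Fintype α] [DecidableEq α]

/-- Cost `f(x₁^k) = ∑_{i=1}^k w_i(x₁^i) - b k` of a node. -/
def cost (w : List α → ℝ) (b : ℝ) (l : List α) : ℝ :=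
  ((l.inits.filter fun p => !p.isEmpty).map w).sum - b * l.length

/-- Maximum of the cost along the (nonempty) prefixes of a node. -/
def maxCost (w : List α → ℝ) (b : ℝ) (l : List α) : ℝ :=
  ((l.inits.tail).map (cost w b)).foldr max (cost w b l)

/-- Children of a node in the full tree of depth `m`. -/
def children (m : ℕ) (l : List α) : Finset (List α) :=
  if l.length < m then Finset.univ.image (fun a : α => l ++ [a]) else ∅

/-- The stack algorithm: expand a minimum-cost frontier node until a leaf is
on top; returns the chosen leaf (if any) and the set of generated nodes. -/
noncomputable def run (w : List α → ℝ) (b : ℝ) (m : ℕ) :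
    ℕ → Finset (List α) → Finset (List α) → Option (List α) × Finset (List α)
  | 0, _, G => (none, G)
  | fuel + 1, F, G =>
      if hF : F.Nonempty then
        let n := Classical.choose (F.exists_min_image (cost w b) hF)
        if n.length = m then (some n, G)
        else run w b m fuel ((F.erase n) ∪ children m n) (G ∪ children m n)
      else (none, G)

end StackAlg

/-! Fix a leaf `x` and let `C` be the largest cost of a nonempty prefix of `x`. After the root
is expanded, the frontier always contains a node of `x` from which every node further down `x`
costs at most `C`: expanding that node puts its child on `x` into the frontier. So the node
selected at each step, being a cheapest frontier node, costs at most `C`; and every nonempty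
prefix of the chosen leaf was selected at some step. The root is treated separately because
its cost `0` need not be at most `C`. -/

theorem List.foldr_max_le_iff {c C : ℝ} {L : List ℝ} :
    L.foldr max c ≤ C ↔ c ≤ C ∧ ∀ y ∈ L, y ≤ C := by
  induction L with
  | nil => simp
  | cons y t ih => simp only [List.foldr_cons, max_le_iff, ih, List.forall_mem_cons]; tauto

theorem List.mem_inits_tail {α : Type*} {p l : List α} :
    p ∈ l.inits.tail ↔ p <+: l ∧ p ≠ [] := by
  cases l with
  | nil => simp
  | cons a t =>
    cases p with
    | nil => simp
    | cons c s => simp [List.cons_prefix_cons, eq_comm, and_comm]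

namespace StackAlg

variable {α : Type} {w : List α → ℝ} {b C : ℝ}

theorem maxCost_le_iff {x : List α} (hx : x ≠ []) :
    maxCost w b x ≤ C ↔ ∀ p, p <+: x → p ≠ [] → cost w b p ≤ C := by
  simp only [maxCost, List.foldr_max_le_iff, List.forall_mem_map, List.mem_inits_tail, and_imp]
  exact ⟨fun h => h.2, fun h => ⟨h x List.prefix_rfl hx, h⟩⟩

noncomputable def best (w : List α → ℝ) (b : ℝ) (F : Finset (List α)) (hF : F.Nonempty) :
    List α :=
  Classical.choose (F.exists_min_image (cost w b) hF)

theorem best_mem {F : Finset (List α)} (hF : F.Nonempty) : best w b F hF ∈ F :=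
  (Classical.choose_spec (F.exists_min_image (cost w b) hF)).1

theorem cost_best_le {F : Finset (List α)} (hF : F.Nonempty) {q : List α} (hq : q ∈ F) :
    cost w b (best w b F hF) ≤ cost w b q :=
  (Classical.choose_spec (F.exists_min_image (cost w b) hF)).2 q hq

def CostLEBetween (w : List α → ℝ) (b C : ℝ) (r x : List α) : Prop :=
  r <+: x ∧ ∀ p, r <+: p → p <+: x → cost w b p ≤ C

theorem CostLEBetween.mono {r r' x : List α} (h : CostLEBetween w b C r x) (hr : r <+: r')
    (hr' : r' <+: x) : CostLEBetween w b C r' x :=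
  ⟨hr', fun p hp hpx => h.2 p (hr.trans hp) hpx⟩

theorem CostLEBetween.of_append_singleton {r x : List α} {a : α}
    (h : CostLEBetween w b C (r ++ [a]) x) (hr : cost w b r ≤ C) : CostLEBetween w b C r x := by
  refine ⟨(List.prefix_append r [a]).trans h.1, fun p hp hpx => ?_⟩
  rcases eq_or_ne p r with rfl | hpr
  · exact hr
  · have hlen : (r ++ [a]).length ≤ p.length := by
      have := hp.length_le
      have : r.length ≠ p.length := fun heq => hpr (hp.eq_of_length heq).symm
      simp only [List.length_append, List.length_singleton]
      omega
    exact h.2 p (List.prefix_of_prefix_length_le h.1 hpx hlen) hpx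

theorem costLEBetween_self {r : List α} (hr : cost w b r ≤ C) : CostLEBetween w b C r r :=
  ⟨List.prefix_rfl, fun _ hp hpr => hpr.eq_of_length_le hp.length_le ▸ hr⟩

theorem costLEBetween_singleton_maxCost (c : α) (t : List α) :
    CostLEBetween w b (maxCost w b (c :: t)) [c] (c :: t) :=
  ⟨⟨t, rfl⟩, fun p hp hpx =>
    (maxCost_le_iff (List.cons_ne_nil c t)).1 le_rfl p hpx (List.ne_nil_of_length_pos hp.length_le)⟩

theorem maxCost_le_of_costLEBetween_singleton {a : α} {x : List α}
    (h : CostLEBetween w b C [a] x) : maxCost w b x ≤ C :=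
  (maxCost_le_iff (List.ne_nil_of_length_pos h.1.length_le)).2 fun p hpx hp =>
    h.2 p (List.prefix_of_prefix_length_le h.1 hpx (List.length_pos_of_ne_nil hp)) hpx

section

variable [Fintype α] [DecidableEq α]

theorem mem_children {m : ℕ} {n p : List α} :
    p ∈ children m n ↔ n.length < m ∧ ∃ a, n ++ [a] = p := by
  unfold children
  split_ifs <;> simp_all

theorem run_succ {m fuel : ℕ} {F : Finset (List α)} (G : Finset (List α)) (hF : F.Nonempty) :
    run w b m (fuel + 1) F G =
      if (best w b F hF).length = m then (some (best w b F hF), G)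
      else run w b m fuel (F.erase (best w b F hF) ∪ children m (best w b F hF))
        (G ∪ children m (best w b F hF)) := by
  rw [run, dif_pos hF]
  rfl

theorem run_root_succ {m fuel : ℕ} (G : Finset (List α)) (hm : 0 < m) :
    run w b m (fuel + 1) {[]} G = run w b m fuel (children m []) (G ∪ children m []) := by
  have hF : ({[]} : Finset (List α)).Nonempty := Finset.singleton_nonempty _
  have hbest : best w b {[]} hF = [] := Finset.mem_singleton.1 (best_mem hF)
  simp [run_succ G hF, hbest, hm.ne]

theorem length_of_run_eq_some {m : ℕ} :
    ∀ {fuel : ℕ} {F G G' : Finset (List α)} {xbar : List α},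
      run w b m fuel F G = (some xbar, G') → xbar.length = m
  | 0, _, _, _, _, hrun => by simp [run] at hrun
  | fuel + 1, F, G, _, _, hrun => by
    by_cases hF : F.Nonempty
    · rw [run_succ G hF] at hrun
      split_ifs at hrun with hlen
      · cases hrun
        exact hlen
      · exact length_of_run_eq_some hrun
    · simp [run, hF] at hrun

theorem exists_costLEBetween_step {m : ℕ} {F : Finset (List α)} {n q x : List α}
    (hx : x.length = m) (hn : n.length ≠ m) (hq : q ∈ F) (hqx : CostLEBetween w b C q x) :
    ∃ q' ∈ F.erase n ∪ children m n, CostLEBetween w b C q' x := by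
  rcases eq_or_ne q n with rfl | hqn
  · obtain ⟨t, ht⟩ := hqx.1
    obtain ⟨c, t, rfl⟩ : ∃ c t', t = c :: t' := by
      refine List.exists_cons_of_ne_nil fun htnil => hn ?_
      rw [← hx, ← ht, htnil, List.append_nil]
    have hlen : q.length < m := by
      rw [← hx, ← ht, List.length_append, List.length_cons]
      omega
    refine ⟨q ++ [c], Finset.mem_union_right _ (mem_children.2 ⟨hlen, c, rfl⟩), ?_⟩
    exact hqx.mono (List.prefix_append q [c]) ⟨t, by rw [← ht, List.append_assoc]; rfl⟩
  · exact ⟨q, Finset.mem_union_left _ (Finset.mem_erase.2 ⟨hqn, hq⟩), hqx⟩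

theorem exists_costLEBetween_of_run_eq_some {m : ℕ} {x : List α} (hx : x.length = m) :
    ∀ {fuel : ℕ} {F G G' : Finset (List α)} {xbar : List α},
      run w b m fuel F G = (some xbar, G') → (∃ q ∈ F, CostLEBetween w b C q x) →
      ∃ r ∈ F, CostLEBetween w b C r xbar
  | 0, _, _, _, _, hrun, _ => by simp [run] at hrun
  | fuel + 1, F, G, _, _, hrun, ⟨q, hqF, hqx⟩ => by
    have hF : F.Nonempty := ⟨q, hqF⟩
    have hbestC : cost w b (best w b F hF) ≤ C :=
      (cost_best_le hF hqF).trans (hqx.2 q List.prefix_rfl hqx.1)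
    rw [run_succ G hF] at hrun
    split_ifs at hrun with hlen
    · cases hrun
      exact ⟨_, best_mem hF, costLEBetween_self hbestC⟩
    · obtain ⟨r, hr, hrx⟩ :=
        exists_costLEBetween_of_run_eq_some hx hrun (exists_costLEBetween_step hx hlen hqF hqx)
      rcases Finset.mem_union.1 hr with hr | hr
      · exact ⟨r, Finset.mem_of_mem_erase hr, hrx⟩
      · obtain ⟨-, a, rfl⟩ := mem_children.1 hr
        exact ⟨_, best_mem hF, hrx.of_append_singleton hbestC⟩

theorem stack_minimax_general (w : List α → ℝ) (b : ℝ)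
    (m fuel : ℕ) (xbar : List α) (G : Finset (List α))
    (hrun : run w b m fuel {([] : List α)} {([] : List α)} = (some xbar, G))
    (x : List α) (hx : x.length = m) :
    maxCost w b xbar ≤ maxCost w b x := by
  have hxbar := length_of_run_eq_some hrun
  rcases Nat.eq_zero_or_pos m with rfl | hm
  · rw [List.length_eq_zero_iff.1 hxbar, List.length_eq_zero_iff.1 hx]
  obtain ⟨fuel, rfl⟩ : ∃ k, fuel = k + 1 :=
    Nat.exists_eq_succ_of_ne_zero (by rintro rfl; simp [run] at hrun)
  obtain ⟨c, t, rfl⟩ := List.exists_cons_of_length_pos (hx ▸ hm)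
  rw [run_root_succ _ hm] at hrun
  obtain ⟨r, hr, hrx⟩ := exists_costLEBetween_of_run_eq_some hx hrun
    ⟨[c], mem_children.2 ⟨hm, c, rfl⟩, costLEBetween_singleton_maxCost c t⟩
  obtain ⟨-, a, rfl⟩ := mem_children.1 hr
  exact maxCost_le_of_costLEBetween_singleton hrx

/-- Minimax property of the stack algorithm (Proposition 1): the chosen leaf path
minimizes, over all root-to-leaf paths, the maximum cost along the path. -/
theorem stack_minimax (w : List α → ℝ) (hw : ∀ l, 0 ≤ w l) (b : ℝ) (hb : 0 ≤ b)
    (m fuel : ℕ) (xbar : List α) (G : Finset (List α))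
    (hrun : run w b m fuel {([] : List α)} {([] : List α)} = (some xbar, G))
    (x : List α) (hx : x.length = m) :
    maxCost w b xbar ≤ maxCost w b x :=
  stack_minimax_general w b m fuel xbar G hrun x hx

end

end StackAlg
end

section
/- Let f'_M = max{0, |w_{r+k+1}|² - b, |w_{r+k+1}^{r+k+2}|² - 2b, …, |w_{r+k+1}^n|² - b(m-k)} where |w_{r+k+1}^{r+k+j}|² denotes the sum of squares of j consecutive standard Gaussians, and suppose b > 1 with λ₀ > 0 being the positive root of -2λb = log(1-2λ). Then P(f'_M > bk) ≤ e^{-bkλ₀} for every k ≥ 1. -/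
open MeasureTheory ProbabilityTheory Real Finset
open scoped ENNReal NNReal

/-!
Since `E[exp (λ₀ (w² - b))] = exp (-λ₀ b) / √(1 - 2λ₀) = 1` exactly when `-2λ₀b = log (1 - 2λ₀)`,
the products `exp (λ₀ Sₙ)` along the walk `Sₙ = ∑_{i<n} (wᵢ² - b)` form a nonnegative martingale
of mean one. Doob's maximal inequality then bounds the probability that it ever reaches
`exp (λ₀ b k)` by `exp (-λ₀ b k)`.
-/

lemma gaussianPDFReal_zero_one_mul_exp_mul_sq (t x : ℝ) :
    gaussianPDFReal 0 1 x * exp (t * x ^ 2) = (√(2 * π))⁻¹ * exp (-(1 / 2 - t) * x ^ 2) := by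
  rw [gaussianPDFReal, mul_assoc, ← exp_add]
  congr 2 <;> simp; ring

lemma integrable_exp_mul_sq_gaussianReal {t : ℝ} (ht : t < 1 / 2) :
    Integrable (fun x ↦ exp (t * x ^ 2)) (gaussianReal 0 1) := by
  rw [gaussianReal_of_var_ne_zero 0 one_ne_zero,
    integrable_withDensity_iff (measurable_gaussianPDF 0 1)
      (ae_of_all _ fun _ ↦ gaussianPDF_lt_top)]
  simp_rw [toReal_gaussianPDF, mul_comm _ (gaussianPDFReal _ _ _),
    gaussianPDFReal_zero_one_mul_exp_mul_sq]
  exact (integrable_exp_neg_mul_sq (by linarith)).const_mul _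

lemma integral_exp_mul_sq_gaussianReal {t : ℝ} (ht : t < 1 / 2) :
    ∫ x, exp (t * x ^ 2) ∂gaussianReal 0 1 = (√(1 - 2 * t))⁻¹ := by
  rw [integral_gaussianReal_eq_integral_smul one_ne_zero]
  simp_rw [smul_eq_mul, gaussianPDFReal_zero_one_mul_exp_mul_sq]
  have h2t : π / (1 / 2 - t) = 2 * π / (1 - 2 * t) := by
    field_simp
  have : √(2 * π) ≠ 0 := by positivity
  rw [integral_const_mul, integral_gaussian, h2t, sqrt_div' _ (by linarith)]
  field_simp

lemma exp_mul_sq_sub_eq (t b x : ℝ) :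
    exp (t * (x ^ 2 - b)) = exp (t * x ^ 2) * exp (-(t * b)) := by
  rw [← exp_add, ← sub_eq_add_neg, ← mul_sub]

lemma integrable_exp_mul_sq_sub_gaussianReal {t : ℝ} (ht : t < 1 / 2) (b : ℝ) :
    Integrable (fun x ↦ exp (t * (x ^ 2 - b))) (gaussianReal 0 1) := by
  simpa only [exp_mul_sq_sub_eq] using (integrable_exp_mul_sq_gaussianReal ht).mul_const _

lemma exp_neg_mul_eq_sqrt_of_log_eq {t b : ℝ} (ht : t < 1 / 2)
    (hroot : -2 * t * b = log (1 - 2 * t)) : exp (-(t * b)) = √(1 - 2 * t) := by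
  rw [sqrt_eq_rpow, rpow_def_of_pos (by linarith), ← hroot]
  ring_nf

lemma integral_exp_mul_sq_sub_gaussianReal_of_log_eq {t b : ℝ} (ht : t < 1 / 2)
    (hroot : -2 * t * b = log (1 - 2 * t)) :
    ∫ x, exp (t * (x ^ 2 - b)) ∂gaussianReal 0 1 = 1 := by
  have hpos : 0 < √(1 - 2 * t) := sqrt_pos.mpr (by linarith)
  simp only [exp_mul_sq_sub_eq]
  rw [integral_mul_const, integral_exp_mul_sq_gaussianReal ht,
    exp_neg_mul_eq_sqrt_of_log_eq ht hroot, inv_mul_cancel₀ hpos.ne']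

lemma exp_mul_le_sup'_succ_of_lt_sup' {s : ℕ → ℝ} {c t : ℝ} {N : ℕ} (ht : 0 ≤ t)
    (hs : s 0 ≤ c) (h : c < (range (N + 1)).sup' nonempty_range_add_one s) :
    exp (t * c) ≤ (range (N + 1)).sup' nonempty_range_add_one fun j ↦ exp (t * s (j + 1)) := by
  rw [lt_sup'_iff] at h
  obtain ⟨j, hj, hcj⟩ := h
  rcases j with _ | j
  · linarith
  · have hj' : j ∈ range (N + 1) := mem_range.mpr (by simp at hj; omega)
    exact le_sup'_of_le _ hj' (exp_le_exp.mpr (mul_le_mul_of_nonneg_left hcj.le ht))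

namespace MeasureTheory

theorem Martingale.mul_measure_le_sup'_le_integral_zero {Ω : Type*} {mΩ : MeasurableSpace Ω}
    {μ : Measure Ω} [IsFiniteMeasure μ] {𝒢 : Filtration ℕ mΩ} {f : ℕ → Ω → ℝ}
    (hf : Martingale f 𝒢 μ) (hnonneg : 0 ≤ f) (ε : ℝ≥0) (n : ℕ) :
    ε * μ {ω | (ε : ℝ) ≤ (range (n + 1)).sup' nonempty_range_add_one fun k ↦ f k ω} ≤
      ENNReal.ofReal (μ[f 0]) := by
  refine (maximal_ineq hf.submartingale hnonneg n).trans (ENNReal.ofReal_le_ofReal ?_)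
  calc ∫ ω in _, f n ω ∂μ ≤ μ[f n] :=
        setIntegral_le_integral (hf.integrable n) (ae_of_all _ (hnonneg n))
    _ = μ[f 0] := by simpa using (hf.setIntegral_eq (Nat.zero_le n) MeasurableSet.univ).symm

end MeasureTheory

namespace ProbabilityTheory

variable {Ω : Type*} {mΩ : MeasurableSpace Ω} {μ : Measure Ω}

section PartialProduct

variable {Y : ℕ → Ω → ℝ}

lemma stronglyAdapted_natural_partialProd (hY : ∀ i, StronglyMeasurable (Y i)) :
    StronglyAdapted (Filtration.natural Y hY) fun n ω ↦ ∏ i ∈ range (n + 1), Y i ω := fun n ↦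
  Finset.stronglyMeasurable_fun_prod (range (n + 1)) fun i hi ↦
    (Filtration.stronglyAdapted_natural hY i).mono
      ((Filtration.natural Y hY).mono (Nat.lt_succ_iff.mp (mem_range.mp hi)))

lemma iIndepFun.indepFun_partialProd (hY : ∀ i, StronglyMeasurable (Y i)) (hind : iIndepFun Y μ)
    (n : ℕ) : IndepFun (fun ω ↦ ∏ i ∈ range (n + 1), Y i ω) (Y (n + 1)) μ := by
  rw [IndepFun_iff_Indep]
  exact indep_of_indep_of_le_left (hind.indep_comap_natural_of_lt hY n.lt_succ_self).symm
    (stronglyAdapted_natural_partialProd hY n).measurable.comap_le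

lemma iIndepFun.integrable_partialProd (hY : ∀ i, StronglyMeasurable (Y i))
    (hind : iIndepFun Y μ) (hint : ∀ i, Integrable (Y i) μ) (n : ℕ) :
    Integrable (fun ω ↦ ∏ i ∈ range (n + 1), Y i ω) μ := by
  induction n with
  | zero => simpa using hint 0
  | succ n ih =>
    simp_rw [prod_range_succ _ (n + 1)]
    exact (hind.indepFun_partialProd hY n).integrable_mul ih (hint (n + 1))

lemma iIndepFun.martingale_partialProd (hY : ∀ i, StronglyMeasurable (Y i))
    (hind : iIndepFun Y μ) (hint : ∀ i, Integrable (Y i) μ) (hmean : ∀ i, μ[Y i] = 1) :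
    Martingale (fun n ω ↦ ∏ i ∈ range (n + 1), Y i ω) (Filtration.natural Y hY) μ := by
  have := hind.isProbabilityMeasure
  refine martingale_nat (stronglyAdapted_natural_partialProd hY)
    (hind.integrable_partialProd hY hint) fun n ↦ ?_
  have hsplit : (fun ω ↦ ∏ i ∈ range (n + 1 + 1), Y i ω)
      = (fun ω ↦ ∏ i ∈ range (n + 1), Y i ω) * Y (n + 1) := by
    ext ω; simp [prod_range_succ _ (n + 1)]
  have hpull := condExp_mul_of_stronglyMeasurable_left (m := Filtration.natural Y hY n)
    (stronglyAdapted_natural_partialProd hY n)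
    (hsplit ▸ hind.integrable_partialProd hY hint (n + 1)) (hint (n + 1))
  have hindep := hind.condExp_natural_ae_eq_of_lt hY n.lt_succ_self
  rw [hsplit]
  filter_upwards [hpull, hindep] with ω h₁ h₂
  simp [h₁, h₂, hmean]

end PartialProduct

/-- Ville's inequality for the exponential martingale `exp (t Sₙ)` of the walk. -/
theorem iIndepFun.measure_lt_sup'_partialSum_le {X : ℕ → Ω → ℝ} (hX : ∀ i, Measurable (X i))
    (hind : iIndepFun X μ) {t c : ℝ} (ht : 0 ≤ t) (hc : 0 ≤ c)
    (hint : ∀ i, Integrable (fun ω ↦ exp (t * X i ω)) μ)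
    (hmean : ∀ i, ∫ ω, exp (t * X i ω) ∂μ = 1) (N : ℕ) :
    μ {ω | c < (range (N + 1)).sup' nonempty_range_add_one fun j ↦ ∑ i ∈ range j, X i ω} ≤
      ENNReal.ofReal (exp (-(t * c))) := by
  have := hind.isProbabilityMeasure
  have hY : ∀ i, StronglyMeasurable fun ω ↦ exp (t * X i ω) := fun i ↦
    (measurable_exp.comp ((hX i).const_mul t)).stronglyMeasurable
  have hmart := (hind.comp (fun _ x ↦ exp (t * x)) fun _ ↦ by fun_prop).martingale_partialProd
    hY hint hmean
  set ε : ℝ≥0 := ⟨exp (t * c), (exp_pos _).le⟩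
  have hmax := hmart.mul_measure_le_sup'_le_integral_zero
    (fun n ω ↦ prod_nonneg fun i _ ↦ (exp_pos _).le) ε N
  simp only [zero_add, prod_range_one, hmean 0, ENNReal.ofReal_one] at hmax
  have hsub : {ω | c < (range (N + 1)).sup' nonempty_range_add_one
        fun j ↦ ∑ i ∈ range j, X i ω} ⊆
      {ω | (ε : ℝ) ≤ (range (N + 1)).sup' nonempty_range_add_one
        fun n ↦ ∏ i ∈ range (n + 1), exp (t * X i ω)} := fun ω hω ↦ by
    simp only [Set.mem_ofPred_eq, ← exp_sum, ← mul_sum]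
    exact exp_mul_le_sup'_succ_of_lt_sup' (s := fun j ↦ ∑ i ∈ range j, X i ω) ht
      (by simpa using hc) hω
  calc _ ≤ _ := measure_mono hsub
    _ ≤ (ε : ℝ≥0∞)⁻¹ := ENNReal.le_inv_iff_mul_le.mpr (by rwa [mul_comm])
    _ = _ := by
      rw [← ENNReal.ofReal_coe_nnreal]
      change (ENNReal.ofReal (exp (t * c)))⁻¹ = _
      rw [← ENNReal.ofReal_inv_of_pos (exp_pos _), ← exp_neg]

end ProbabilityTheory

theorem stopped_walk_tail_bound_general
    {Ω : Type*} [MeasurableSpace Ω] (μ : Measure Ω)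
    (w : ℕ → Ω → ℝ) (hmeas : ∀ i, Measurable (w i))
    (hindep : iIndepFun w μ)
    (hdist : ∀ i, Measure.map (w i) μ = gaussianReal 0 1)
    (b : ℝ) (lam0 : ℝ) (hlam0 : 0 < lam0) (hlam0' : lam0 < 1 / 2)
    (hroot : -2 * lam0 * b = Real.log (1 - 2 * lam0))
    (N : ℕ) (k : ℕ) :
    μ {ω | b * k <
        (Finset.range (N + 1)).sup' Finset.nonempty_range_add_one
          (fun j => (∑ i ∈ Finset.range j, (w i ω) ^ 2) - b * j)} ≤
      ENNReal.ofReal (Real.exp (-(b * k * lam0))) := by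
  have hb : 0 ≤ b := by
    have : log (1 - 2 * lam0) < 0 := log_neg (by linarith) (by linarith)
    nlinarith
  have hh : Measurable fun x : ℝ ↦ exp (lam0 * (x ^ 2 - b)) := by fun_prop
  have hX : ∀ i, Measurable fun ω ↦ w i ω ^ 2 - b := fun i ↦ by fun_prop
  have hint : ∀ i, Integrable (fun ω ↦ exp (lam0 * (w i ω ^ 2 - b))) μ := fun i ↦
    (integrable_map_measure hh.aestronglyMeasurable (hmeas i).aemeasurable).mp
      (hdist i ▸ integrable_exp_mul_sq_sub_gaussianReal hlam0' b)
  have hmean : ∀ i, ∫ ω, exp (lam0 * (w i ω ^ 2 - b)) ∂μ = 1 := fun i ↦ by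
    rw [← integral_exp_mul_sq_sub_gaussianReal_of_log_eq hlam0' hroot, ← hdist i,
      integral_map (hmeas i).aemeasurable hh.aestronglyMeasurable]
  have hindepX : iIndepFun (fun i ω ↦ w i ω ^ 2 - b) μ :=
    hindep.comp (fun _ x ↦ x ^ 2 - b) fun _ ↦ by fun_prop
  have hwalk := hindepX.measure_lt_sup'_partialSum_le hX hlam0.le
    (by positivity : 0 ≤ b * k) hint hmean N
  simpa [sum_sub_distrib, mul_comm, mul_left_comm] using hwalk

/-- Wald bound on the maximum of the stopped random walk
`f'_M = max_{0 ≤ j ≤ N} (∑_{i<j} w_i² - b j)` with `w_i` i.i.d. `N(0,1)`: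
if `b > 1` and `λ₀ ∈ (0, 1/2)` is the positive root of `-2λb = log(1-2λ)`,
then `P(f'_M > bk) ≤ e^{-bkλ₀}` for every `k ≥ 1`. -/
theorem stopped_walk_tail_bound
    {Ω : Type*} [MeasurableSpace Ω] (μ : Measure Ω) [IsProbabilityMeasure μ]
    (w : ℕ → Ω → ℝ) (hmeas : ∀ i, Measurable (w i))
    (hindep : iIndepFun w μ)
    (hdist : ∀ i, Measure.map (w i) μ = gaussianReal 0 1)
    (b : ℝ) (hb : 1 < b) (lam0 : ℝ) (hlam0 : 0 < lam0) (hlam0' : lam0 < 1 / 2)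
    (hroot : -2 * lam0 * b = Real.log (1 - 2 * lam0))
    (N : ℕ) (k : ℕ) (hk : 1 ≤ k) :
    μ {ω | b * k <
        (Finset.range (N + 1)).sup' Finset.nonempty_range_add_one
          (fun j => (∑ i ∈ Finset.range j, (w i ω) ^ 2) - b * j)} ≤
      ENNReal.ofReal (Real.exp (-(b * k * lam0))) :=
  stopped_walk_tail_bound_general μ w hmeas hindep hdist b lam0 hlam0 hlam0' hroot N k
end

section
/- For η > b > 0, the incomplete gamma bound γ(bk/(2η), (r+k)/2) ≤ ((b/η)·e^{1 - b/η})^{k/2} holds for all integers k ≥ 1 and r ≥ 0, where γ(x, a) = (1/Γ(a))∫₀^x t^{a-1}e^{-t}dt is the regularized lower incomplete gamma function. -/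
/-!
Chernoff bound: on `[0, x]` we have `e^{-t} ≤ e^{(θ-1)x} e^{-θt}` for every `θ ≥ 1`, and integrating
`t^{a-1} e^{-θt}` over all of `(0, ∞)` gives `θ^{-a} Γ(a)`, so `γ(x, a) ≤ e^{(θ-1)x} θ^{-a}`.
At `x = u m` the choice `θ = 1/u` yields `(u e^{1-u})^m u^{a-m}`, and `u^{a-m} ≤ 1` because
`u ≤ 1` and `a ≥ m`.
-/

open Real MeasureTheory Set

/-- The regularized lower incomplete gamma function
`γ(x, a) = (1/Γ(a)) ∫₀ˣ t^{a-1} e^{-t} dt`. -/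
noncomputable def regIncGamma (x a : ℝ) : ℝ :=
  (1 / Real.Gamma a) * ∫ t in (0 : ℝ)..x, t ^ (a - 1) * Real.exp (-t)

lemma integrableOn_rpow_mul_exp_neg_mul {a θ : ℝ} (ha : 0 < a) (hθ : 0 < θ) :
    IntegrableOn (fun t : ℝ => t ^ (a - 1) * exp (-(θ * t))) (Ioi 0) := by
  simpa only [rpow_one, neg_mul] using
    integrableOn_rpow_mul_exp_neg_mul_rpow (by linarith : -1 < a - 1) one_pos hθ

lemma intervalIntegral_rpow_mul_exp_neg_mul_le {a θ x : ℝ} (ha : 0 < a) (hθ : 0 < θ)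
    (hx : 0 ≤ x) :
    ∫ t in (0 : ℝ)..x, t ^ (a - 1) * exp (-(θ * t)) ≤ (1 / θ) ^ a * Gamma a := by
  rw [← integral_rpow_mul_exp_neg_mul_Ioi ha hθ, intervalIntegral.integral_of_le hx]
  refine setIntegral_mono_set (integrableOn_rpow_mul_exp_neg_mul ha hθ) ?_
    (Filter.Eventually.of_forall fun _ h ↦ Ioc_subset_Ioi_self h)
  filter_upwards [ae_restrict_mem measurableSet_Ioi] with t (ht : 0 < t)
  positivity

lemma exp_neg_le_exp_mul_exp_neg_mul {θ x t : ℝ} (hθ : 1 ≤ θ) (ht : t ≤ x) :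
    exp (-t) ≤ exp ((θ - 1) * x) * exp (-(θ * t)) := by
  rw [← exp_add, exp_le_exp]
  nlinarith

theorem regIncGamma_le_exp_mul_rpow {a θ x : ℝ} (ha : 0 < a) (hθ : 1 ≤ θ) (hx : 0 ≤ x) :
    regIncGamma x a ≤ exp ((θ - 1) * x) * (1 / θ) ^ a := by
  have hθ0 : 0 < θ := by linarith
  have hint : ∀ s : ℝ, 0 < s →
      IntervalIntegrable (fun t : ℝ => t ^ (a - 1) * exp (-(s * t))) volume 0 x := fun s hs ↦
    (intervalIntegrable_iff_integrableOn_Ioc_of_le hx).mpr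
      ((integrableOn_rpow_mul_exp_neg_mul ha hs).mono_set Ioc_subset_Ioi_self)
  have hpointwise : ∀ t ∈ Icc 0 x, t ^ (a - 1) * exp (-(1 * t)) ≤
      exp ((θ - 1) * x) * (t ^ (a - 1) * exp (-(θ * t))) := fun t ht ↦ by
    rw [one_mul, mul_left_comm]
    exact mul_le_mul_of_nonneg_left (exp_neg_le_exp_mul_exp_neg_mul hθ ht.2)
      (rpow_nonneg ht.1 _)
  have hintegral : ∫ t in (0 : ℝ)..x, t ^ (a - 1) * exp (-t) ≤
      exp ((θ - 1) * x) * ((1 / θ) ^ a * Gamma a) := by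
    calc ∫ t in (0 : ℝ)..x, t ^ (a - 1) * exp (-t)
        = ∫ t in (0 : ℝ)..x, t ^ (a - 1) * exp (-(1 * t)) := by simp only [one_mul]
      _ ≤ ∫ t in (0 : ℝ)..x, exp ((θ - 1) * x) * (t ^ (a - 1) * exp (-(θ * t))) :=
          intervalIntegral.integral_mono_on hx (hint 1 one_pos)
            ((hint θ hθ0).const_mul _) hpointwise
      _ ≤ exp ((θ - 1) * x) * ((1 / θ) ^ a * Gamma a) := by
          rw [intervalIntegral.integral_const_mul]
          exact mul_le_mul_of_nonneg_left
            (intervalIntegral_rpow_mul_exp_neg_mul_le ha hθ0 hx) (exp_nonneg _)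
  calc regIncGamma x a ≤ 1 / Gamma a * (exp ((θ - 1) * x) * ((1 / θ) ^ a * Gamma a)) :=
        mul_le_mul_of_nonneg_left hintegral (by positivity)
    _ = exp ((θ - 1) * x) * (1 / θ) ^ a := by field_simp

@[simp]
lemma regIncGamma_zero_left (a : ℝ) : regIncGamma 0 a = 0 := by
  simp [regIncGamma]

theorem regIncGamma_mul_le {u m a : ℝ} (hu0 : 0 < u) (hu1 : u ≤ 1) (hm : 0 ≤ m)
    (hma : m ≤ a) : regIncGamma (u * m) a ≤ (u * exp (1 - u)) ^ m := by
  rcases hm.eq_or_lt with rfl | hm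
  · simp
  calc regIncGamma (u * m) a ≤ exp ((1 / u - 1) * (u * m)) * (1 / (1 / u)) ^ a :=
        regIncGamma_le_exp_mul_rpow (by linarith) (one_le_one_div hu0 hu1) (by positivity)
    _ = exp ((1 - u) * m) * u ^ a := by
        congr 2
        · field_simp
        · rw [one_div_one_div]
    _ ≤ exp ((1 - u) * m) * u ^ m :=
        mul_le_mul_of_nonneg_left (rpow_le_rpow_of_exponent_ge hu0 hu1 hma) (exp_nonneg _)
    _ = (u * exp (1 - u)) ^ m := by
        rw [mul_rpow hu0.le (exp_nonneg _), ← exp_mul, mul_comm]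

theorem incGamma_bound_general (b η : ℝ) (hb : 0 < b) (hbη : b < η) (k r : ℕ) :
    regIncGamma (b * k / (2 * η)) (((r : ℝ) + k) / 2) ≤
      (b / η * Real.exp (1 - b / η)) ^ ((k : ℝ) / 2) := by
  have hη : 0 < η := hb.trans hbη
  rw [show b * k / (2 * η) = b / η * (k / 2) by ring]
  exact regIncGamma_mul_le (div_pos hb hη) ((div_le_one hη).mpr hbη.le) (by positivity)
    (by linarith [(r.cast_nonneg : (0 : ℝ) ≤ r)])

/-- For `η > b > 0`, integers `k ≥ 1` and `r ≥ 0`,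
`γ(bk/(2η), (r+k)/2) ≤ ((b/η) e^{1 - b/η})^{k/2}`. -/
theorem incGamma_bound (b η : ℝ) (hb : 0 < b) (hbη : b < η) (k r : ℕ) (hk : 1 ≤ k) :
    regIncGamma (b * k / (2 * η)) (((r : ℝ) + k) / 2) ≤
      (b / η * Real.exp (1 - b / η)) ^ ((k : ℝ) / 2) :=
  incGamma_bound_general b η hb hbη k r
end
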